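/- Let X be a nonempty compact metric space, and suppose X admits a countable infinite family A of pairwise disjoint closed connected subsets such that: (a2) A is null (diameters tend to 0), (a3) each member of A has dense complement in X, (a4) the union of A is dense in X, and (a5) any two points of X not in a common member of A are separated by an open-closed A-saturated subset. Then the quotient space X/A obtained by collapsing each member of A to a point is homeomorphic to the Cantor set. -/

import Mathlib

/-!
Collapsing the members of `A` yields a compact space whose clopen sets separate points (images
of the `A`-saturated sets of (a5)) and are countable (their preimages are clopen in the compact
metric space `X`), and which has no isolated point: an open fibre meets `⋃ A` by (a4), so it is
a member of `A` that is open, against (a3).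

Such a space is homeomorphic to `ℕ → Bool`. Enumerate its clopen sets as `C 0, C 1, …` and,
starting from the whole space, split every cell `U` into `U ∩ C n` and `U \ C n` for the least
`n` making both halves nonempty; a nonempty clopen set has two points, so such an `n` exists.
Along every branch these indices increase strictly, so two points separated by `C n` are
separated by the tree after at most `n + 1` steps; every branch has a point by compactness; and
each coordinate of the address map depends only on finitely many clopen cells. The address map
is thus a continuous bijection from a compact space onto a Hausdorff one.
-/

open Set Function PiNat

theorem countable_setOf_isClopen (X : Type*) [TopologicalSpace X] [CompactSpace X]
    [SecondCountableTopology X] : {s : Set X | IsClopen s}.Countable := by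
  obtain ⟨B, hBc, -, hB⟩ := TopologicalSpace.exists_countable_basis X
  refine ((countable_ofPred_finite_subset hBc).image sUnion).mono fun U hU => ?_
  obtain ⟨s, hs, rfl⟩ := eq_finite_iUnion_of_isTopologicalBasis_of_isCompact_open
    ((↑) : B → Set X) (by simpa using hB) U hU.isClosed.isCompact hU.isOpen
  exact ⟨(↑) '' s, ⟨hs.image _, by simp [image_subset_iff]⟩, sUnion_image _ _⟩

theorem Set.Countable.setOf_isClopen_of_surjective {X Y : Type*} [TopologicalSpace X]
    [TopologicalSpace Y] {f : X → Y} (hf : Continuous f) (hsurj : Surjective f)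
    (h : {s : Set X | IsClopen s}.Countable) : {t : Set Y | IsClopen t}.Countable :=
  MapsTo.countable_of_injOn (fun _ ht => ht.preimage hf) hsurj.preimage_injective.injOn h

section Collapse

variable {X : Type*} (A : ℕ → Set X)

def SameMember (x y : X) : Prop := x = y ∨ ∃ n, x ∈ A n ∧ y ∈ A n

variable {A} (hdisj : Pairwise (Disjoint on A))
include hdisj

theorem sameMember_equivalence : Equivalence (SameMember A) where
  refl _ := Or.inl rfl
  symm := by
    rintro x y (rfl | ⟨n, hx, hy⟩)
    · exact Or.inl rfl
    · exact Or.inr ⟨n, hy, hx⟩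
  trans := by
    rintro x y z (rfl | ⟨m, hx, hy⟩) (rfl | ⟨n, hy', hz⟩)
    · exact Or.inl rfl
    · exact Or.inr ⟨n, hy', hz⟩
    · exact Or.inr ⟨m, hx, hy⟩
    · exact Or.inr ⟨m, hx, hdisj.eq (not_disjoint_iff.mpr ⟨y, hy', hy⟩) ▸ hz⟩

theorem preimage_mk_singleton_of_mem {n : ℕ} {y : X} (hy : y ∈ A n) :
    Quot.mk (SameMember A) ⁻¹' {Quot.mk _ y} = A n := by
  ext z
  rw [mem_preimage, mem_singleton_iff, (sameMember_equivalence hdisj).quot_mk_eq_iff]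
  constructor
  · rintro (rfl | ⟨m, hz, hy'⟩)
    · exact hy
    · exact hdisj.eq (not_disjoint_iff.mpr ⟨y, hy', hy⟩) ▸ hz
  · exact fun hz => Or.inr ⟨n, hz, hy⟩

theorem preimage_image_mk_of_saturated {H : Set X} (hH : ∀ n, A n ⊆ H ∨ Disjoint (A n) H) :
    Quot.mk (SameMember A) ⁻¹' (Quot.mk _ '' H) = H := by
  refine Subset.antisymm ?_ (subset_preimage_image _ _)
  rintro z ⟨w, hw, hwz⟩
  rcases ((sameMember_equivalence hdisj).quot_mk_eq_iff w z).mp hwz with rfl | ⟨n, hwn, hzn⟩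
  · exact hw
  · exact (hH n).resolve_right (not_disjoint_iff.mpr ⟨w, hwn, hw⟩) hzn

variable [TopologicalSpace X]

theorem totallySeparatedSpace_quot_sameMember
    (hsep : ∀ x y : X, x ≠ y → (¬ ∃ n, x ∈ A n ∧ y ∈ A n) →
      ∃ H : Set X, IsOpen H ∧ IsClosed H ∧ x ∈ H ∧ y ∉ H ∧
        ∀ n, A n ⊆ H ∨ Disjoint (A n) H) :
    TotallySeparatedSpace (Quot (SameMember A)) := by
  refine totallySeparatedSpace_iff_exists_isClopen.mpr ?_
  rintro ⟨x⟩ ⟨y⟩ hxy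
  have hxy' : ¬SameMember A x y := fun h => hxy (Quot.sound h)
  obtain ⟨H, hHo, hHc, hxH, hyH, hH⟩ :=
    hsep x y (fun h => hxy' (Or.inl h)) (fun h => hxy' (Or.inr h))
  have hpre := preimage_image_mk_of_saturated hdisj hH
  refine ⟨Quot.mk _ '' H, ⟨?_, ?_⟩, mem_image_of_mem _ hxH, fun hy => hyH ?_⟩
  · rw [← isQuotientMap_quot_mk.isClosed_preimage, hpre]
    exact hHc
  · rw [← isQuotientMap_quot_mk.isOpen_preimage, hpre]
    exact hHo
  · rw [← hpre]
    exact hy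

theorem perfectSpace_quot_sameMember (hbdry : ∀ n, Dense (A n)ᶜ) (hdense : Dense (⋃ n, A n)) :
    PerfectSpace (Quot (SameMember A)) := by
  refine perfectSpace_iff_forall_not_isolated.mpr fun q => ⟨fun hq => ?_⟩
  have hopen : IsOpen (Quot.mk (SameMember A) ⁻¹' {q}) :=
    ((isOpen_singleton_iff_punctured_nhds q).mpr hq).preimage continuous_quot_mk
  obtain ⟨x, rfl⟩ := Quot.mk_surjective q
  obtain ⟨y, hyq, hy⟩ := hdense.inter_open_nonempty _ hopen ⟨x, rfl⟩
  obtain ⟨n, hyn⟩ := mem_iUnion.mp hy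
  rw [← mem_singleton_iff.mp hyq, preimage_mk_singleton_of_mem hdisj hyn] at hopen
  obtain ⟨z, hzA, hz⟩ := (hbdry n).inter_open_nonempty _ hopen ⟨y, hyn⟩
  exact hz hzA

end Collapse

namespace CantorCoding

variable {Y : Type*} (C : ℕ → Set Y)

def Splits (t U : Set Y) : Prop := (U ∩ t).Nonempty ∧ (U \ t).Nonempty

noncomputable def splitIndex (U : Set Y) : ℕ := sInf {n | Splits (C n) U}

def half (U : Set Y) : Bool → Set Y
  | true => U ∩ C (splitIndex C U)
  | false => U \ C (splitIndex C U)

-- Addresses are read newest bit first, as in `PiNat.res`.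
def cell : List Bool → Set Y
  | [] => univ
  | b :: l => half C (cell l) b

open Classical in
noncomputable def bit (U : Set Y) (y : Y) : Bool := decide (y ∈ C (splitIndex C U))

noncomputable def address (y : Y) : ℕ → List Bool
  | 0 => []
  | k + 1 => bit C (cell C (address y k)) y :: address y k

noncomputable def code (y : Y) (k : ℕ) : Bool := bit C (cell C (address C y k)) y

variable {C}

theorem Splits.mono {t U V : Set Y} (h : Splits t V) (hVU : V ⊆ U) : Splits t U :=
  ⟨h.1.mono (inter_subset_inter_left _ hVU), h.2.mono (sdiff_subset_sdiff_left hVU)⟩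

theorem half_subset (U : Set Y) (b : Bool) : half C U b ⊆ U := by
  cases b
  · exact sdiff_subset
  · exact inter_subset_left

theorem mem_half_iff {U : Set Y} {b : Bool} {y : Y} :
    y ∈ half C U b ↔ y ∈ U ∧ bit C U y = b := by
  cases b <;> simp [half, bit]

theorem address_eq_res (y : Y) (k : ℕ) : address C y k = res (code C y) k := by
  induction k with
  | zero => rfl
  | succ k ih => rw [res_succ, ← ih]; rfl

theorem mem_cell_iff {y : Y} {l : List Bool} : y ∈ cell C l ↔ res (code C y) l.length = l := by
  induction l with
  | nil => simp [cell]
  | cons b l ih =>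
    rw [cell, mem_half_iff, ih, List.length_cons, res_succ, List.cons.injEq, code,
      address_eq_res]
    constructor
    · rintro ⟨hl, rfl⟩
      rw [hl]
      exact ⟨rfl, rfl⟩
    · rintro ⟨rfl, hl⟩
      rw [hl]
      exact ⟨rfl, rfl⟩

theorem splits_splitIndex {U : Set Y} (h : ∃ n, Splits (C n) U) :
    Splits (C (splitIndex C U)) U :=
  Nat.sInf_mem h

theorem half_nonempty {U : Set Y} (h : ∃ n, Splits (C n) U) (b : Bool) :
    (half C U b).Nonempty := by
  cases b
  · exact (splits_splitIndex h).2
  · exact (splits_splitIndex h).1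

-- `C (splitIndex C U)` splits neither half of `U`, and no earlier `C n` even splits `U`.
theorem splitIndex_lt_splitIndex_half {U : Set Y} {b : Bool}
    (h : ∃ n, Splits (C n) (half C U b)) :
    splitIndex C U < splitIndex C (half C U b) := by
  by_contra! hle
  have hsplit := splits_splitIndex h
  rcases hle.lt_or_eq with hlt | heq
  · exact Nat.notMem_of_lt_sInf hlt (hsplit.mono (half_subset U b))
  · rw [heq] at hsplit
    obtain ⟨⟨y, hyU, hyC⟩, ⟨z, hzU, hzC⟩⟩ := hsplit
    cases b
    · exact hyU.2 hyC
    · exact hzC hzU.2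

variable [TopologicalSpace Y]

theorem isClopen_cell (hC : ∀ n, IsClopen (C n)) (l : List Bool) : IsClopen (cell C l) := by
  induction l with
  | nil => exact isClopen_univ
  | cons b l ih =>
    cases b
    · exact ih.diff (hC _)
    · exact ih.inter (hC _)

theorem isLocallyConstant_res_code (hC : ∀ n, IsClopen (C n)) (k : ℕ) :
    IsLocallyConstant fun y => res (code C y) k := by
  refine IsLocallyConstant.iff_isOpen_fiber.mpr fun l => ?_
  by_cases hl : l.length = k
  · subst hl
    convert (isClopen_cell hC l).isOpen using 1
    ext y
    exact mem_cell_iff.symm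
  · convert isOpen_empty
    refine eq_empty_of_forall_notMem fun y hy => hl ?_
    rw [← mem_singleton_iff.mp hy, res_length]

theorem continuous_code (hC : ∀ n, IsClopen (C n)) : Continuous (code C) :=
  continuous_pi fun k => ((isLocallyConstant_res_code hC (k + 1)).comp List.headI).continuous

variable [PerfectSpace Y]

theorem exists_splits (hsep : ∀ x y : Y, x ≠ y → ∃ n, x ∈ C n ∧ y ∉ C n) {U : Set Y}
    (hU : IsOpen U) (hne : U.Nonempty) : ∃ n, Splits (C n) U := by
  obtain ⟨x, hx⟩ := hne
  obtain ⟨y, hy, hyx⟩ : ∃ y ∈ U, y ≠ x := by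
    by_contra! h
    exact not_isOpen_singleton x (by rwa [eq_singleton_iff_unique_mem.mpr ⟨hx, h⟩] at hU)
  obtain ⟨n, hxn, hyn⟩ := hsep x y hyx.symm
  exact ⟨n, ⟨x, hx, hxn⟩, ⟨y, hy, hyn⟩⟩

variable (hC : ∀ n, IsClopen (C n))
  (hsep : ∀ x y : Y, x ≠ y → ∃ n, x ∈ C n ∧ y ∉ C n)
include hC hsep

theorem cell_nonempty [Nonempty Y] (l : List Bool) : (cell C l).Nonempty := by
  induction l with
  | nil => exact univ_nonempty
  | cons b l ih => exact half_nonempty (exists_splits hsep (isClopen_cell hC l).isOpen ih) b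

theorem exists_splits_cell [Nonempty Y] (l : List Bool) : ∃ n, Splits (C n) (cell C l) :=
  exists_splits hsep (isClopen_cell hC l).isOpen (cell_nonempty hC hsep l)

theorem length_le_splitIndex_cell [Nonempty Y] (l : List Bool) :
    l.length ≤ splitIndex C (cell C l) := by
  induction l with
  | nil => exact Nat.zero_le _
  | cons b l ih =>
    exact ih.trans_lt (splitIndex_lt_splitIndex_half (exists_splits_cell hC hsep (b :: l)))

theorem code_injective [Nonempty Y] : Injective (code C) := by
  intro x y hxy
  by_contra hne
  obtain ⟨n, hxn, hyn⟩ := hsep x y hne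
  set l := res (code C x) (n + 1)
  have hx : x ∈ cell C l := mem_cell_iff.mpr (by rw [res_length])
  have hy : y ∈ cell C l := mem_cell_iff.mpr (by rw [res_length, ← hxy])
  have hle : splitIndex C (cell C l) ≤ n := Nat.sInf_le ⟨⟨x, hx, hxn⟩, ⟨y, hy, hyn⟩⟩
  have := length_le_splitIndex_cell hC hsep l
  rw [res_length] at this
  omega

theorem code_surjective [CompactSpace Y] [Nonempty Y] : Surjective (code C) := by
  intro σ
  have hanti : ∀ k, cell C (res σ (k + 1)) ⊆ cell C (res σ k) := fun k => by
    rw [res_succ]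
    exact half_subset _ _
  obtain ⟨y, hy⟩ := IsCompact.nonempty_iInter_of_sequence_nonempty_isCompact_isClosed _ hanti
    (fun k => cell_nonempty hC hsep _) (isClopen_cell hC _).isClosed.isCompact
    (fun k => (isClopen_cell hC _).isClosed)
  refine ⟨y, res_injective (funext fun k => ?_)⟩
  simpa only [mem_cell_iff, res_length] using mem_iInter.mp hy k

end CantorCoding

open CantorCoding in
theorem nonempty_homeomorph_natBool (Y : Type*) [TopologicalSpace Y] [CompactSpace Y]
    [Nonempty Y] [TotallySeparatedSpace Y] [PerfectSpace Y]
    (hcount : {s : Set Y | IsClopen s}.Countable) :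
    Nonempty (Y ≃ₜ (ℕ → Bool)) := by
  obtain ⟨C, hC⟩ := hcount.exists_eq_range ⟨univ, isClopen_univ⟩
  have hclopen : ∀ n, IsClopen (C n) := fun n => (hC ▸ mem_range_self n :)
  have hsep : ∀ x y : Y, x ≠ y → ∃ n, x ∈ C n ∧ y ∉ C n := fun x y hxy => by
    obtain ⟨U, hU, hxU, hyU⟩ := exists_isClopen_of_totally_separated hxy
    obtain ⟨n, rfl⟩ : U ∈ range C := hC ▸ hU
    exact ⟨n, hxU, hyU⟩
  exact ⟨(continuous_code hclopen).homeoOfEquivCompactToT2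
    (f := Equiv.ofBijective _ ⟨code_injective hclopen hsep, code_surjective hclopen hsep⟩)⟩

theorem stmt19 (X : Type) [MetricSpace X] [CompactSpace X] [Nonempty X]
    (A : ℕ → Set X)
    (hdisj : ∀ m n, m ≠ n → Disjoint (A m) (A n))
    (hbdry : ∀ n, Dense ((A n)ᶜ))
    (hdense : Dense (⋃ n, A n))
    (hsep : ∀ x y : X, x ≠ y → (¬ ∃ n, x ∈ A n ∧ y ∈ A n) →
      ∃ H : Set X, IsOpen H ∧ IsClosed H ∧ x ∈ H ∧ y ∉ H ∧
        ∀ n, A n ⊆ H ∨ Disjoint (A n) H) :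
    Nonempty ((Quot (fun x y : X => x = y ∨ ∃ n, x ∈ A n ∧ y ∈ A n)) ≃ₜ (ℕ → Bool)) := by
  have : Nonempty (Quot (SameMember A)) := Nonempty.map (Quot.mk _) ‹_›
  have := totallySeparatedSpace_quot_sameMember hdisj hsep
  have := perfectSpace_quot_sameMember hdisj hbdry hdense
  exact nonempty_homeomorph_natBool (Quot (SameMember A))
    ((countable_setOf_isClopen X).setOf_isClopen_of_surjective continuous_quot_mk
      Quot.mk_surjective)
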